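/- arXiv:1603.07866 — 5 statements merged into one kernel-verified Lean document; each statement's English description precedes it below -/
import Mathlib

section
/- Let n, T be positive integers, X a real n×T matrix and r ∈ ℝ^T. For γ > 0 set Q̃_γ = (T⁻¹XᵀX + γ I_T)⁻¹. Then lim_{γ→0⁺} γ · T⁻¹ rᵀ Q̃_γ r = T⁻¹ · inf_{ω ∈ ℝⁿ} ‖r − Xᵀω‖², the per-input least-squares training mean-square error. (Lemma 'Training MSE and resolvent'.) -/
/-!
Put `A = T⁻¹ XᵀX`, which is positive semidefinite, and split `r = u + A z` with `A u = 0`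
(possible because `A` is symmetric). Then `X u = 0`, so `u` is orthogonal to the range of `Xᵀ`,
which contains `A z`: the least-squares residual of `r` is `u` and the infimum is `‖u‖²`.
On the other side, `γ (A + γ)⁻¹` fixes `u` and, by `(A + γ)⁻¹ A = 1 - γ (A + γ)⁻¹`, sends `A z`
to `γ (z - γ (A + γ)⁻¹ z)`, which is `O(γ)` because `‖γ (A + γ)⁻¹ z‖ ≤ ‖z‖` for `A ≥ 0`.
Hence `γ (A + γ)⁻¹ r → u` and `γ T⁻¹ rᵀ (A + γ)⁻¹ r → T⁻¹ r ⬝ u = T⁻¹ ‖u‖²`.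
-/

open Matrix Filter Topology

namespace Matrix

variable {ι : Type*}

/-- Since `rank (A * A) = rank A`, the vector `A r` lies in the range of `A * A`, say
`A r = A (A z)`; then `u := r - A z` is in the kernel. -/
theorem IsHermitian.exists_eq_add_mulVec {R : Type*} [Field R] [PartialOrder R] [StarRing R]
    [StarOrderedRing R] [Fintype ι] {A : Matrix ι ι R} (hA : A.IsHermitian) (r : ι → R) :
    ∃ u z : ι → R, A *ᵥ u = 0 ∧ r = u + A *ᵥ z := by
  have hrange : LinearMap.range (A * A).mulVecLin = LinearMap.range A.mulVecLin := by
    refine Submodule.eq_of_le_of_finrank_eq ?_ ?_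
    · rw [mulVecLin_mul]
      exact LinearMap.range_comp_le_range _ _
    · have := rank_conjTranspose_mul_self A
      rwa [hA.eq] at this
  obtain ⟨z, hz⟩ : A *ᵥ r ∈ LinearMap.range (A * A).mulVecLin := hrange ▸ ⟨r, rfl⟩
  refine ⟨r - A *ᵥ z, z, ?_, by abel⟩
  rw [mulVec_sub, mulVec_mulVec, ← hz, mulVecLin_apply, sub_self]

variable {A : Matrix ι ι ℝ} [DecidableEq ι]

theorem PosSemidef.posDef_add_smul_one (hA : A.PosSemidef) {γ : ℝ} (hγ : 0 < γ) :
    (A + γ • 1).PosDef :=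
  PosDef.posSemidef_add hA (PosDef.one.smul hγ)

variable [Fintype ι]

theorem inv_add_smul_one_mul {γ : ℝ} (h : IsUnit (A + γ • 1).det) :
    (A + γ • 1)⁻¹ * A = 1 - γ • (A + γ • 1)⁻¹ :=
  calc (A + γ • 1)⁻¹ * A = (A + γ • 1)⁻¹ * ((A + γ • 1) - γ • 1) := by rw [add_sub_cancel_right]
    _ = 1 - γ • (A + γ • 1)⁻¹ := by rw [mul_sub, nonsing_inv_mul _ h, mul_smul_comm, mul_one]

theorem PosSemidef.mulVec_inv_add_smul_one_mulVec (hA : A.PosSemidef) {γ : ℝ} (hγ : 0 < γ)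
    (z : ι → ℝ) : A *ᵥ ((A + γ • 1)⁻¹ *ᵥ z) + γ • (A + γ • 1)⁻¹ *ᵥ z = z := by
  have hdet := (hA.posDef_add_smul_one hγ).det_pos.ne'.isUnit
  calc A *ᵥ ((A + γ • 1)⁻¹ *ᵥ z) + γ • (A + γ • 1)⁻¹ *ᵥ z
      = (A + γ • 1) *ᵥ ((A + γ • 1)⁻¹ *ᵥ z) := by rw [add_mulVec, smul_mulVec, one_mulVec]
    _ = z := by rw [mulVec_mulVec, mul_nonsing_inv _ hdet, one_mulVec]

theorem PosSemidef.norm_toLp_smul_inv_add_smul_one_mulVec_le (hA : A.PosSemidef) {γ : ℝ}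
    (hγ : 0 < γ) (z : ι → ℝ) :
    ‖WithLp.toLp 2 (γ • (A + γ • 1)⁻¹ *ᵥ z)‖ ≤ ‖WithLp.toLp 2 z‖ := by
  set y := (A + γ • 1)⁻¹ *ᵥ z
  have hy : A *ᵥ y + γ • y = z := hA.mulVec_inv_add_smul_one_mulVec hγ z
  have hinner : γ * ‖WithLp.toLp 2 y‖ ^ 2 ≤ ‖WithLp.toLp 2 y‖ * ‖WithLp.toLp 2 z‖ := calc
    γ * ‖WithLp.toLp 2 y‖ ^ 2 ≤ star y ⬝ᵥ (A *ᵥ y) + γ * ‖WithLp.toLp 2 y‖ ^ 2 :=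
      le_add_of_nonneg_left (hA.dotProduct_mulVec_nonneg y)
    _ = inner ℝ (WithLp.toLp 2 y) (WithLp.toLp 2 z) := by
      rw [← hy, WithLp.toLp_add, WithLp.toLp_smul, inner_add_right, inner_smul_right,
        real_inner_self_eq_norm_sq, EuclideanSpace.inner_toLp_toLp, dotProduct_comm]
    _ ≤ _ := real_inner_le_norm _ _
  rw [WithLp.toLp_smul, norm_smul, Real.norm_of_nonneg hγ.le]
  rcases (norm_nonneg (WithLp.toLp 2 y)).eq_or_lt with h | h
  · rw [← h, mul_zero]; exact norm_nonneg _
  · nlinarith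

theorem PosSemidef.tendsto_smul_inv_add_smul_one_mulVec (hA : A.PosSemidef) {u : ι → ℝ}
    (hu : A *ᵥ u = 0) (z : ι → ℝ) :
    Tendsto (fun γ : ℝ => γ • (A + γ • 1)⁻¹ *ᵥ (u + A *ᵥ z)) (𝓝[>] 0) (𝓝 u) := by
  have hsplit : ∀ γ : ℝ, 0 < γ → γ • (A + γ • 1)⁻¹ *ᵥ (u + A *ᵥ z)
      = u + γ • (z - γ • (A + γ • 1)⁻¹ *ᵥ z) := by
    intro γ hγ
    have hdet := (hA.posDef_add_smul_one hγ).det_pos.ne'.isUnit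
    have hres_mulVec (v : ι → ℝ) : (A + γ • 1)⁻¹ *ᵥ (A *ᵥ v) = v - γ • (A + γ • 1)⁻¹ *ᵥ v := by
      rw [mulVec_mulVec, inv_add_smul_one_mul hdet, sub_mulVec, one_mulVec, smul_mulVec]
    have hfix : γ • (A + γ • 1)⁻¹ *ᵥ u = u := by
      have h := hres_mulVec u
      rw [hu, mulVec_zero, eq_comm, sub_eq_zero] at h
      exact h.symm
    rw [mulVec_add, smul_add, hfix, hres_mulVec]
  have hbdd : IsBoundedUnder (· ≤ ·) (𝓝[>] 0)
      (norm ∘ fun γ : ℝ => z - γ • (A + γ • 1)⁻¹ *ᵥ z) := by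
    refine ⟨‖z‖ + ‖WithLp.toLp 2 z‖, eventually_nhdsWithin_of_forall fun γ hγ => ?_⟩
    calc ‖z - γ • (A + γ • 1)⁻¹ *ᵥ z‖ ≤ ‖z‖ + ‖γ • (A + γ • 1)⁻¹ *ᵥ z‖ := norm_sub_le _ _
      _ ≤ ‖z‖ + ‖WithLp.toLp 2 z‖ := by
        gcongr
        refine (pi_norm_le_iff_of_nonneg (norm_nonneg _)).2 fun i => ?_
        exact (PiLp.norm_apply_le _ i).trans (hA.norm_toLp_smul_inv_add_smul_one_mulVec_le hγ z)
  have hsmall : Tendsto (fun γ : ℝ => γ • (z - γ • (A + γ • 1)⁻¹ *ᵥ z)) (𝓝[>] 0) (𝓝 0) :=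
    tendsto_nhdsWithin_of_tendsto_nhds tendsto_id |>.zero_smul_isBoundedUnder_le hbdd
  refine (add_zero u ▸ tendsto_const_nhds.add hsmall).congr' ?_
  filter_upwards [self_mem_nhdsWithin] with γ hγ using (hsplit γ hγ).symm

end Matrix

section LeastSquares

variable {m n : Type*} [Fintype m] [Fintype n] {X : Matrix m n ℝ} {u : n → ℝ}

theorem dotProduct_transpose_mulVec_eq_zero (hu : X *ᵥ u = 0) (c : m → ℝ) :
    u ⬝ᵥ Xᵀ *ᵥ c = 0 := by
  rw [dotProduct_mulVec, vecMul_transpose, hu, zero_dotProduct]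

theorem dotProduct_self_add_transpose_mulVec (hu : X *ᵥ u = 0) (c : m → ℝ) :
    (u + Xᵀ *ᵥ c) ⬝ᵥ (u + Xᵀ *ᵥ c) = u ⬝ᵥ u + (Xᵀ *ᵥ c) ⬝ᵥ (Xᵀ *ᵥ c) := by
  rw [add_dotProduct, dotProduct_add, dotProduct_add, dotProduct_comm (Xᵀ *ᵥ c) u,
    dotProduct_transpose_mulVec_eq_zero hu]
  ring

theorem iInf_dotProduct_self_sub_transpose_mulVec (hu : X *ᵥ u = 0) {r : n → ℝ} {c : m → ℝ}
    (hr : r = u + Xᵀ *ᵥ c) :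
    ⨅ ω : m → ℝ, (r - Xᵀ *ᵥ ω) ⬝ᵥ (r - Xᵀ *ᵥ ω) = u ⬝ᵥ u := by
  have hresidual (ω : m → ℝ) : r - Xᵀ *ᵥ ω = u + Xᵀ *ᵥ (c - ω) := by
    rw [hr, mulVec_sub]; abel
  refine IsLeast.csInf_eq ⟨⟨c, by simp [hresidual]⟩, ?_⟩
  rintro _ ⟨ω, rfl⟩
  dsimp only
  rw [hresidual, dotProduct_self_add_transpose_mulVec hu]
  exact le_add_of_nonneg_right (dotProduct_star_self_nonneg _)

end LeastSquares

theorem training_mse_resolvent_limit_general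
    (n T : ℕ) (hT : 0 < T)
    (X : Matrix (Fin n) (Fin T) ℝ) (r : Fin T → ℝ) :
    Tendsto
      (fun γ : ℝ =>
        γ * ((T : ℝ)⁻¹ *
          (r ⬝ᵥ (((T : ℝ)⁻¹ • (Xᵀ * X) + γ • (1 : Matrix (Fin T) (Fin T) ℝ))⁻¹ *ᵥ r))))
      (𝓝[>] (0 : ℝ))
      (𝓝 ((T : ℝ)⁻¹ *
        ⨅ ω : Fin n → ℝ, (r - Xᵀ *ᵥ ω) ⬝ᵥ (r - Xᵀ *ᵥ ω))) := by
  have hT' : (T : ℝ)⁻¹ ≠ 0 := inv_ne_zero (Nat.cast_ne_zero.2 hT.ne')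
  set A := (T : ℝ)⁻¹ • (Xᵀ * X)
  have hA : A.PosSemidef := by
    simpa [conjTranspose_eq_transpose_of_trivial] using
      (posSemidef_conjTranspose_mul_self X).smul (by positivity : (0 : ℝ) ≤ (T : ℝ)⁻¹)
  obtain ⟨u, z, hu, rfl⟩ := hA.isHermitian.exists_eq_add_mulVec r
  have hXu : X *ᵥ u = 0 := by
    rw [← conjTranspose_mul_self_mulVec_eq_zero, conjTranspose_eq_transpose_of_trivial]
    simpa [A, smul_mulVec, hT'] using hu
  have hAz : A *ᵥ z = Xᵀ *ᵥ ((T : ℝ)⁻¹ • X *ᵥ z) := by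
    rw [smul_mulVec, ← mulVec_mulVec, mulVec_smul]
  rw [iInf_dotProduct_self_sub_transpose_mulVec hXu (congrArg (u + ·) hAz)]
  have hcont : Continuous fun v => (T : ℝ)⁻¹ * ((u + A *ᵥ z) ⬝ᵥ v) := by fun_prop
  convert (hcont.tendsto u).comp (hA.tendsto_smul_inv_add_smul_one_mulVec hu z) using 2
  · simp only [Function.comp_apply, dotProduct_smul, smul_eq_mul]
    ring
  · rw [add_dotProduct, dotProduct_comm (A *ᵥ z), hAz, dotProduct_transpose_mulVec_eq_zero hXu,
      add_zero]

/-- **Training MSE and resolvent.**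
Let `X` be a real `n × T` matrix and `r ∈ ℝ^T`.  For `γ > 0` set
`Q̃_γ = (T⁻¹ Xᵀ X + γ I_T)⁻¹`.  Then
`lim_{γ → 0⁺} γ · T⁻¹ rᵀ Q̃_γ r = T⁻¹ · inf_{ω ∈ ℝⁿ} ‖r − Xᵀ ω‖²`,
the per-input least-squares training mean-square error.  (Squared Euclidean
norms are written via the dot product: `‖v‖² = v ⬝ᵥ v`.) -/
theorem training_mse_resolvent_limit
    (n T : ℕ) (hn : 0 < n) (hT : 0 < T)
    (X : Matrix (Fin n) (Fin T) ℝ) (r : Fin T → ℝ) :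
    Tendsto
      (fun γ : ℝ =>
        γ * ((T : ℝ)⁻¹ *
          (r ⬝ᵥ (((T : ℝ)⁻¹ • (Xᵀ * X) + γ • (1 : Matrix (Fin T) (Fin T) ℝ))⁻¹ *ᵥ r))))
      (𝓝[>] (0 : ℝ))
      (𝓝 ((T : ℝ)⁻¹ *
        ⨅ ω : Fin n → ℝ, (r - Xᵀ *ᵥ ω) ⬝ᵥ (r - Xᵀ *ᵥ ω))) :=
  training_mse_resolvent_limit_general n T hT X r
end

section
/- Let n, T be positive integers with T > n, X a real n×T matrix such that XXᵀ is invertible, r ∈ ℝ^T, and ω = (XXᵀ)⁻¹ X r the least-squares readout. For γ > 0 set Q̃_γ = (T⁻¹XᵀX + γ I_T)⁻¹. Then T⁻¹‖r − Xᵀω‖² = lim_{γ→0⁺} γ · T⁻¹ rᵀ Q̃_γ r. -/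
/-!
For `γ > 0` the push-through identity `(YX + γ)Y = Y(XY + γ)` with `Y = T⁻¹Xᵀ` gives
`γ (T⁻¹XᵀX + γ)⁻¹ = 1 - T⁻¹Xᵀ (T⁻¹XXᵀ + γ)⁻¹ X`. Unlike the left side, the right side is
continuous at `γ = 0` because `XXᵀ` is invertible, and its value there, `1 - Xᵀ(XXᵀ)⁻¹X`, is the
orthogonal projection onto the residual space, whose quadratic form at `r` is `‖r - Xᵀω‖²`.
-/

open Matrix Filter Topology

namespace Matrix

variable {m k : Type*} [Fintype m] [Fintype k] [DecidableEq m]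

section LeastSquares

variable {R : Type*} [CommRing R]

theorem mulVec_sub_transpose_mulVec_inv_mulVec_eq_zero {X : Matrix m k R} (hX : IsUnit (X * Xᵀ))
    (r : k → R) : X *ᵥ (r - Xᵀ *ᵥ ((X * Xᵀ)⁻¹ *ᵥ (X *ᵥ r))) = 0 := by
  rw [mulVec_sub, mulVec_mulVec, mulVec_mulVec,
    mul_nonsing_inv _ ((isUnit_iff_isUnit_det _).mp hX), one_mulVec, sub_self]

variable [DecidableEq k]

theorem dotProduct_one_sub_transpose_mul_inv_mul_mulVec {X : Matrix m k R}
    (hX : IsUnit (X * Xᵀ)) (r : k → R) :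
    r ⬝ᵥ ((1 - Xᵀ * (X * Xᵀ)⁻¹ * X) *ᵥ r) =
      (r - Xᵀ *ᵥ ((X * Xᵀ)⁻¹ *ᵥ (X *ᵥ r))) ⬝ᵥ (r - Xᵀ *ᵥ ((X * Xᵀ)⁻¹ *ᵥ (X *ᵥ r))) := by
  set ω := (X * Xᵀ)⁻¹ *ᵥ (X *ᵥ r)
  have hresidual : (1 - Xᵀ * (X * Xᵀ)⁻¹ * X) *ᵥ r = r - Xᵀ *ᵥ ω := by
    rw [sub_mulVec, one_mulVec, ← mulVec_mulVec, ← mulVec_mulVec]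
  have horth : Xᵀ *ᵥ ω ⬝ᵥ (r - Xᵀ *ᵥ ω) = 0 := by
    rw [dotProduct_comm, dotProduct_mulVec, vecMul_transpose,
      mulVec_sub_transpose_mulVec_inv_mulVec_eq_zero hX, zero_dotProduct]
  rw [hresidual, sub_dotProduct, horth, sub_zero]

end LeastSquares

variable [DecidableEq k] {𝕜 : Type*}

theorem smul_inv_mul_add_smul_one [Field 𝕜] (X : Matrix m k 𝕜) (Y : Matrix k m 𝕜) {μ : 𝕜}
    (hμ : μ ≠ 0) (hXY : IsUnit (X * Y + μ • 1)) :
    μ • (Y * X + μ • 1)⁻¹ = 1 - Y * (X * Y + μ • 1)⁻¹ * X := by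
  have hB : (X * Y + μ • 1) * (X * Y + μ • 1)⁻¹ = 1 :=
    mul_nonsing_inv _ ((isUnit_iff_isUnit_det _).mp hXY)
  have hcomm : (Y * X + μ • 1) * Y = Y * (X * Y + μ • 1) := by
    simp only [Matrix.add_mul, Matrix.mul_add, Matrix.mul_assoc, Matrix.smul_mul,
      Matrix.mul_smul, Matrix.one_mul, Matrix.mul_one]
  have hright : (Y * X + μ • 1) * (μ⁻¹ • (1 - Y * (X * Y + μ • 1)⁻¹ * X)) = 1 := by
    calc (Y * X + μ • 1) * (μ⁻¹ • (1 - Y * (X * Y + μ • 1)⁻¹ * X))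
        = μ⁻¹ • (Y * X + μ • 1 - Y * ((X * Y + μ • 1) * (X * Y + μ • 1)⁻¹) * X) := by
          rw [Matrix.mul_smul, Matrix.mul_sub, Matrix.mul_one, ← Matrix.mul_assoc,
            ← Matrix.mul_assoc, hcomm, Matrix.mul_assoc Y]
      _ = 1 := by
          rw [hB, Matrix.mul_one, add_sub_cancel_left, smul_smul, inv_mul_cancel₀ hμ, one_smul]
  rw [inv_eq_right_inv hright, smul_smul, mul_inv_cancel₀ hμ, one_smul]

section Limit

variable [NormedField 𝕜]

theorem eventually_isUnit_add_smul_one {A : Matrix m m 𝕜} (hA : IsUnit A) :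
    ∀ᶠ μ in 𝓝 (0 : 𝕜), IsUnit (A + μ • 1) := by
  have hcont : Continuous fun μ : 𝕜 => (A + μ • 1).det := by fun_prop
  have h0 : (A + (0 : 𝕜) • 1).det ≠ 0 := by
    simpa using ((isUnit_iff_isUnit_det A).mp hA).ne_zero
  filter_upwards [hcont.continuousAt.eventually_ne h0] with μ hμ
  exact (isUnit_iff_isUnit_det _).mpr (isUnit_iff_ne_zero.mpr hμ)

theorem tendsto_inv_add_smul_one {A : Matrix m m 𝕜} (hA : IsUnit A) :
    Tendsto (fun μ : 𝕜 => (A + μ • 1)⁻¹) (𝓝 0) (𝓝 A⁻¹) := by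
  have hinv : ContinuousAt Inv.inv A := by
    refine continuousAt_matrix_inv A ?_
    rw [Ring.inverse_eq_inv']
    exact continuousAt_inv₀ ((isUnit_iff_isUnit_det A).mp hA).ne_zero
  have hshift : Tendsto (fun μ : 𝕜 => A + μ • 1) (𝓝 0) (𝓝 A) := by
    have hcont : Continuous fun μ : 𝕜 => A + μ • (1 : Matrix m m 𝕜) := by fun_prop
    simpa using hcont.tendsto 0
  exact hinv.tendsto.comp hshift

theorem tendsto_smul_inv_mul_add_smul_one (X : Matrix m k 𝕜) (Y : Matrix k m 𝕜)
    (hXY : IsUnit (X * Y)) :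
    Tendsto (fun μ : 𝕜 => μ • (Y * X + μ • 1)⁻¹) (𝓝[≠] 0) (𝓝 (1 - Y * (X * Y)⁻¹ * X)) := by
  have hlim : Tendsto (fun μ : 𝕜 => 1 - Y * (X * Y + μ • 1)⁻¹ * X) (𝓝 0)
      (𝓝 (1 - Y * (X * Y)⁻¹ * X)) :=
    ((continuous_const.sub ((continuous_const.matrix_mul continuous_id).matrix_mul
      continuous_const)).tendsto _).comp (tendsto_inv_add_smul_one hXY)
  refine (hlim.mono_left nhdsWithin_le_nhds).congr' ?_
  filter_upwards [self_mem_nhdsWithin,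
    nhdsWithin_le_nhds (eventually_isUnit_add_smul_one hXY)] with μ hμ hunit
  exact (smul_inv_mul_add_smul_one X Y hμ hunit).symm

end Limit

end Matrix

theorem training_mse_eq_resolvent_limit_of_lt_general
    (n T : ℕ) (hnT : n < T)
    (X : Matrix (Fin n) (Fin T) ℝ) (hX : IsUnit (X * Xᵀ))
    (r : Fin T → ℝ)
    (ω : Fin n → ℝ) (hω : ω = (X * Xᵀ)⁻¹ *ᵥ (X *ᵥ r)) :
    Tendsto
      (fun γ : ℝ =>
        γ * ((T : ℝ)⁻¹ *
          (r ⬝ᵥ (((T : ℝ)⁻¹ • (Xᵀ * X) + γ • (1 : Matrix (Fin T) (Fin T) ℝ))⁻¹ *ᵥ r))))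
      (𝓝[>] (0 : ℝ))
      (𝓝 ((T : ℝ)⁻¹ * ((r - Xᵀ *ᵥ ω) ⬝ᵥ (r - Xᵀ *ᵥ ω)))) := by
  have hT : (T : ℝ) ≠ 0 := Nat.cast_ne_zero.mpr (Nat.zero_lt_of_lt hnT).ne'
  have hc : (T : ℝ)⁻¹ ≠ 0 := inv_ne_zero hT
  have hXY : IsUnit (X * ((T : ℝ)⁻¹ • Xᵀ)) := by
    rw [Matrix.mul_smul, ← Units.smul_mk0 hc]
    exact hX.smul _
  have hproj : (T : ℝ)⁻¹ • Xᵀ * (X * ((T : ℝ)⁻¹ • Xᵀ))⁻¹ * X = Xᵀ * (X * Xᵀ)⁻¹ * X := by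
    rw [Matrix.mul_smul, ← Units.smul_mk0 hc (X * Xᵀ),
      inv_smul' _ _ ((isUnit_iff_isUnit_det _).mp hX)]
    simp [Units.smul_def, smul_smul, hT]
  have hlim := (tendsto_smul_inv_mul_add_smul_one X ((T : ℝ)⁻¹ • Xᵀ) hXY).mono_left
    (nhdsGT_le_nhdsNE 0)
  have hform : Continuous fun M : Matrix (Fin T) (Fin T) ℝ => (T : ℝ)⁻¹ * (r ⬝ᵥ (M *ᵥ r)) := by
    fun_prop
  convert (hform.tendsto _).comp hlim using 2 with γ
  · simp only [Function.comp_apply, Matrix.smul_mul, smul_mulVec, dotProduct_smul, smul_eq_mul]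
    ring
  · rw [hproj, dotProduct_one_sub_transpose_mul_inv_mul_mulVec hX, hω]

/-- For `T > n`, `X ∈ ℝ^{n×T}` with `X Xᵀ` invertible, `r ∈ ℝ^T` and the
least-squares readout `ω = (X Xᵀ)⁻¹ X r`, the training mean-square error
satisfies `T⁻¹ ‖r − Xᵀ ω‖² = lim_{γ → 0⁺} γ · T⁻¹ rᵀ Q̃_γ r` where
`Q̃_γ = (T⁻¹ Xᵀ X + γ I_T)⁻¹`.  (Squared Euclidean norms are written via the
dot product: `‖v‖² = v ⬝ᵥ v`.) -/
theorem training_mse_eq_resolvent_limit_of_lt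
    (n T : ℕ) (hn : 0 < n) (hnT : n < T)
    (X : Matrix (Fin n) (Fin T) ℝ) (hX : IsUnit (X * Xᵀ))
    (r : Fin T → ℝ)
    (ω : Fin n → ℝ) (hω : ω = (X * Xᵀ)⁻¹ *ᵥ (X *ᵥ r)) :
    Tendsto
      (fun γ : ℝ =>
        γ * ((T : ℝ)⁻¹ *
          (r ⬝ᵥ (((T : ℝ)⁻¹ • (Xᵀ * X) + γ • (1 : Matrix (Fin T) (Fin T) ℝ))⁻¹ *ᵥ r))))
      (𝓝[>] (0 : ℝ))
      (𝓝 ((T : ℝ)⁻¹ * ((r - Xᵀ *ᵥ ω) ⬝ᵥ (r - Xᵀ *ᵥ ω)))) :=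
  training_mse_eq_resolvent_limit_of_lt_general n T hnT X hX r ω hω
end

section
/- Let W be a real n×n matrix with operator norm ‖W‖ < 1, and let (ε_t)_{t∈ℤ} be an independent family of random vectors in ℝⁿ whose coordinates are i.i.d. standard Gaussian N(0,1). For t ∈ ℤ let z_t = Σ_{k≥0} Wᵏ ε_{t−k} (the almost-sure limit of the partial sums). Then for all a, b ∈ ℤ the cross-covariance matrix satisfies E[z_a z_bᵀ] = S_{b−a}, where S_q = Σ_{k≥0} W^{k+(−q)⁺}(W^{k+q⁺})ᵀ and x⁺ = max(x,0). -/
open Matrix MeasureTheory ProbabilityTheory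
open scoped Matrix.Norms.L2Operator

/-!
Only second moments matter: independent `N(0,1)` coordinates are orthonormal in `L²`, i.e.
`E[ε_s ε_tᵀ] = δ_{st} I`. Since `|(Wᵏ)_{im}| ≤ ‖W‖ᵏ`, the products `(Wᵏ ε_{a-k})_i (Wˡ ε_{b-l})_j`
have integrals bounded by a multiple of `‖W‖ᵏ ‖W‖ˡ`, so the series defining `z_a` and `z_b`
converge absolutely almost surely and the expectation of their product is the double sum of the
termwise expectations. The term `(k, l)` contributes `(Wᵏ (Wˡ)ᵀ)_{ij}` when `a - k = b - l` and
vanishes otherwise; the surviving pairs are `(k + (a-b)⁺, k + (b-a)⁺)`.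
-/

namespace MeasureTheory

variable {Ω : Type*} [MeasurableSpace Ω] {μ : Measure Ω}

lemma ae_summable_norm_of_summable_integral_norm {κ E : Type*} [Countable κ]
    [NormedAddCommGroup E] {f : κ → Ω → E} (hf : ∀ k, Integrable (f k) μ)
    (hsum : Summable fun k => ∫ ω, ‖f k ω‖ ∂μ) :
    ∀ᵐ ω ∂μ, Summable fun k => ‖f k ω‖ := by
  refine summable_norm_of_tsum_eLpNorm_ne_top le_rfl (fun k => (hf k).aestronglyMeasurable) ?_
  simp_rw [eLpNorm_one_eq_lintegral_enorm, ← ofReal_integral_norm_eq_lintegral_enorm (hf _)]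
  rw [← ENNReal.ofReal_tsum_of_nonneg (fun k => integral_nonneg fun _ => norm_nonneg _) hsum]
  exact ENNReal.ofReal_ne_top

lemma integral_tsum_mul_tsum {κ κ' : Type*} [Countable κ] [Countable κ'] {f : κ → Ω → ℝ}
    {g : κ' → Ω → ℝ} (hf : ∀ᵐ ω ∂μ, Summable fun k => ‖f k ω‖)
    (hg : ∀ᵐ ω ∂μ, Summable fun l => ‖g l ω‖)
    (hfg : ∀ kl : κ × κ', Integrable (fun ω => f kl.1 ω * g kl.2 ω) μ)
    (hsum : Summable fun kl : κ × κ' => ∫ ω, ‖f kl.1 ω * g kl.2 ω‖ ∂μ) :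
    ∫ ω, (∑' k, f k ω) * ∑' l, g l ω ∂μ = ∑' kl : κ × κ', ∫ ω, f kl.1 ω * g kl.2 ω ∂μ := by
  rw [integral_tsum_of_summable_integral_norm hfg hsum]
  refine integral_congr_ae ?_
  filter_upwards [hf, hg] with ω hfω hgω
  exact tsum_mul_tsum_of_summable_norm hfω hgω

lemma integral_norm_mul_le_of_memLp_two {X Y : Ω → ℝ} (hX : MemLp X 2 μ) (hY : MemLp Y 2 μ) :
    ∫ ω, ‖X ω * Y ω‖ ∂μ ≤ (∫ ω, X ω ^ 2 ∂μ + ∫ ω, Y ω ^ 2 ∂μ) / 2 := by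
  rw [← integral_add hX.integrable_sq hY.integrable_sq, ← integral_div]
  refine integral_mono (hX.integrable_mul hY).norm
    ((hX.integrable_sq.add hY.integrable_sq).div_const 2) fun ω => ?_
  have := two_mul_le_add_sq ‖X ω‖ ‖Y ω‖
  simp only [norm_mul, Real.norm_eq_abs, sq_abs] at this ⊢
  linarith

end MeasureTheory

namespace ProbabilityTheory.HasLaw

variable {Ω : Type*} [MeasurableSpace Ω] {μ : Measure Ω} {X : Ω → ℝ} {m : ℝ} {v : NNReal}

lemma memLp_of_gaussianReal (hX : HasLaw X (gaussianReal m v) μ) (p : NNReal) :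
    MemLp X p μ := by
  have h := memLp_id_gaussianReal (μ := m) (v := v) p
  rw [← hX.map_eq] at h
  exact h.comp_of_map hX.aemeasurable

lemma integral_eq_of_gaussianReal (hX : HasLaw X (gaussianReal m v) μ) :
    ∫ ω, X ω ∂μ = m := by
  rw [← integral_id_gaussianReal (μ := m) (v := v), ← hX.integral_eq]

lemma integral_sq_of_gaussianReal [IsProbabilityMeasure μ] (hX : HasLaw X (gaussianReal 0 v) μ) :
    ∫ ω, X ω ^ 2 ∂μ = v := by
  have h := hX.variance_eq
  rw [variance_id_gaussianReal, variance_eq_sub (hX.memLp_of_gaussianReal 2),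
    hX.integral_eq_of_gaussianReal] at h
  simpa using h

end ProbabilityTheory.HasLaw

lemma tsum_prod_ite_sub_eq {α : Type*} [AddCommMonoid α] [TopologicalSpace α] (f : ℕ → ℕ → α)
    (q : ℤ) :
    ∑' kl : ℕ × ℕ, (if (kl.2 : ℤ) - kl.1 = q then f kl.1 kl.2 else 0) =
      ∑' k : ℕ, f (k + (-q).toNat) (k + q.toNat) := by
  have hinj : Function.Injective fun k : ℕ => (k + (-q).toNat, k + q.toNat) := fun k k' h => by
    simpa using congrArg Prod.fst h
  rw [← hinj.tsum_eq]
  · exact tsum_congr fun k => if_pos (by omega)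
  · rintro ⟨k, l⟩ hkl
    have hlk : (l : ℤ) - k = q := by
      by_contra h
      exact hkl (if_neg h)
    exact ⟨k - (-q).toNat, Prod.ext (by simp only; omega) (by simp only; omega)⟩

namespace Matrix

variable {m n 𝕜 : Type*} [Fintype n] [DecidableEq n] [RCLike 𝕜]

lemma norm_apply_le_l2_opNorm [Fintype m] (A : Matrix m n 𝕜) (i : m) (j : n) : ‖A i j‖ ≤ ‖A‖ := by
  have h := A.l2_opNorm_mulVec (EuclideanSpace.single j 1)
  rw [PiLp.norm_single, norm_one, mul_one] at h
  refine le_trans (le_of_eq ?_) ((PiLp.norm_apply_le _ i).trans h)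
  simp

lemma norm_pow_apply_le (A : Matrix n n 𝕜) (k : ℕ) (i j : n) : ‖(A ^ k) i j‖ ≤ ‖A‖ ^ k := by
  rcases Nat.eq_zero_or_pos k with rfl | hk
  · by_cases h : i = j <;> simp [h]
  · exact (norm_apply_le_l2_opNorm _ i j).trans (norm_pow_le' A hk)

lemma norm_pow_mulVec_apply_le (A : Matrix n n 𝕜) (k : ℕ) (x : n → 𝕜) (i : n) :
    ‖(A ^ k *ᵥ x) i‖ ≤ ‖A‖ ^ k * ∑ p, ‖x p‖ := by
  rw [Finset.mul_sum]
  refine (norm_sum_le _ _).trans (Finset.sum_le_sum fun p _ => ?_)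
  rw [norm_mul]
  exact mul_le_mul_of_nonneg_right (norm_pow_apply_le A k i p) (norm_nonneg _)

lemma summable_pow_add_mul_transpose_pow_add (W : Matrix n n 𝕜) (hW : ‖W‖ < 1) (c d : ℕ) :
    Summable fun k : ℕ => W ^ (k + c) * (W ^ (k + d))ᵀ := by
  have hr : 0 ≤ ‖W‖ := norm_nonneg W
  refine Pi.summable.mpr fun i => Pi.summable.mpr fun j =>
    Summable.of_norm_bounded (f := fun k => (W ^ (k + c) * (W ^ (k + d))ᵀ) i j)
      ((summable_geometric_of_lt_one hr hW).mul_left (Fintype.card n : ℝ)) fun k => ?_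
  calc ‖(W ^ (k + c) * (W ^ (k + d))ᵀ) i j‖
      ≤ ∑ m, ‖(W ^ (k + c)) i m‖ * ‖(W ^ (k + d)) j m‖ := by
        simp only [mul_apply, transpose_apply, ← norm_mul]
        exact norm_sum_le _ _
    _ ≤ ∑ _m : n, ‖W‖ ^ k := by
        gcongr with m
        calc ‖(W ^ (k + c)) i m‖ * ‖(W ^ (k + d)) j m‖ ≤ ‖W‖ ^ (k + c) * ‖W‖ ^ (k + d) := by
              gcongr <;> exact norm_pow_apply_le _ _ _ _
          _ ≤ ‖W‖ ^ k * 1 := mul_le_mul (pow_le_pow_of_le_one hr hW.le (Nat.le_add_right k c))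
              (pow_le_one₀ hr hW.le) (by positivity) (by positivity)
          _ = ‖W‖ ^ k := mul_one _
    _ = Fintype.card n * ‖W‖ ^ k := by simp

end Matrix

structure IsOrthonormalNoise {T ι Ω : Type*} [DecidableEq T] [DecidableEq ι] [MeasurableSpace Ω]
    (ε : T → Ω → ι → ℝ) (μ : Measure Ω) : Prop where
  memLp : ∀ t i, MemLp (fun ω => ε t ω i) 2 μ
  integral_mul : ∀ s t i j,
    ∫ ω, ε s ω i * ε t ω j ∂μ = if s = t then (1 : Matrix ι ι ℝ) i j else 0

section

variable {T ι Ω : Type*} [DecidableEq T] [DecidableEq ι] [MeasurableSpace Ω] {μ : Measure Ω}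

lemma isOrthonormalNoise_of_iIndepFun_gaussianReal [IsProbabilityMeasure μ] {ε : T → Ω → ι → ℝ}
    (hlaw : ∀ t i, HasLaw (fun ω => ε t ω i) (gaussianReal 0 1) μ)
    (hindep : iIndepFun (fun p : T × ι => fun ω => ε p.1 ω p.2) μ) : IsOrthonormalNoise ε μ where
  memLp t i := (hlaw t i).memLp_of_gaussianReal 2
  integral_mul s t i j := by
    by_cases h : (s, i) = (t, j)
    · obtain ⟨rfl, rfl⟩ := Prod.ext_iff.mp h
      simpa [sq] using (hlaw s i).integral_sq_of_gaussianReal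
    · rw [(hindep.indepFun h).integral_fun_mul_eq_mul_integral
        (hlaw s i).aemeasurable.aestronglyMeasurable (hlaw t j).aemeasurable.aestronglyMeasurable,
        (hlaw s i).integral_eq_of_gaussianReal, zero_mul]
      rcases eq_or_ne s t with rfl | hst
      · simp_all [one_apply]
      · simp [hst]

namespace IsOrthonormalNoise

section

variable {ε : T → Ω → ι → ℝ} (hε : IsOrthonormalNoise ε μ)
include hε

lemma integral_norm_mul_le_one (s t : T) (i j : ι) : ∫ ω, ‖ε s ω i * ε t ω j‖ ∂μ ≤ 1 := by
  have hsq : ∀ t i, ∫ ω, ε t ω i ^ 2 ∂μ = 1 := fun t i => by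
    simpa [sq] using hε.integral_mul t t i i
  have := integral_norm_mul_le_of_memLp_two (hε.memLp s i) (hε.memLp t j)
  rw [hsq, hsq] at this
  linarith

lemma integral_norm_le_one [IsProbabilityMeasure μ] (t : T) (i : ι) : ∫ ω, ‖ε t ω i‖ ∂μ ≤ 1 := by
  have := integral_norm_mul_le_of_memLp_two (hε.memLp t i) (memLp_const (1 : ℝ))
  simp only [mul_one, one_pow, integral_const, probReal_univ, smul_eq_mul] at this
  have hsq : ∫ ω, ε t ω i ^ 2 ∂μ = 1 := by simpa [sq] using hε.integral_mul t t i i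
  linarith

variable [Fintype ι]

lemma memLp_mulVec_apply {κ : Type*} (A : Matrix κ ι ℝ) (t : T) (i : κ) :
    MemLp (fun ω => (A *ᵥ ε t ω) i) 2 μ :=
  memLp_finsetSum _ fun p _ => (hε.memLp t p).const_mul (A i p)

lemma integral_mulVec_mul_mulVec {κ κ' : Type*} (A : Matrix κ ι ℝ) (B : Matrix κ' ι ℝ)
    (s t : T) (i : κ) (j : κ') :
    ∫ ω, (A *ᵥ ε s ω) i * (B *ᵥ ε t ω) j ∂μ = if s = t then (A * Bᵀ) i j else 0 := by
  have hint : ∀ m p, Integrable (fun ω => A i m * B j p * (ε s ω m * ε t ω p)) μ := fun m p =>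
    ((hε.memLp s m).integrable_mul (hε.memLp t p)).const_mul _
  have hexpand : ∀ ω, (A *ᵥ ε s ω) i * (B *ᵥ ε t ω) j =
      ∑ m, ∑ p, A i m * B j p * (ε s ω m * ε t ω p) := fun ω => by
    simp only [mulVec, dotProduct, Finset.sum_mul_sum, mul_mul_mul_comm]
  rw [integral_congr_ae (Filter.Eventually.of_forall hexpand),
    integral_finsetSum _ fun m _ => integrable_finsetSum _ fun p _ => hint m p]
  simp_rw [integral_finsetSum _ fun p _ => hint _ p, integral_const_mul, hε.integral_mul]
  split_ifs <;> simp [mul_apply, one_apply]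

variable (W : Matrix ι ι ℝ)

lemma integral_norm_pow_mulVec_le [IsProbabilityMeasure μ] (k : ℕ) (t : T) (i : ι) :
    ∫ ω, ‖(W ^ k *ᵥ ε t ω) i‖ ∂μ ≤ ‖W‖ ^ k * Fintype.card ι := by
  have hint : ∀ p, Integrable (fun ω => ‖ε t ω p‖) μ := fun p =>
    ((hε.memLp t p).integrable one_le_two).norm
  calc ∫ ω, ‖(W ^ k *ᵥ ε t ω) i‖ ∂μ ≤ ∫ ω, ‖W‖ ^ k * ∑ p, ‖ε t ω p‖ ∂μ :=
        integral_mono ((hε.memLp_mulVec_apply _ t i).integrable one_le_two).norm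
          ((integrable_finsetSum _ fun p _ => hint p).const_mul _)
          fun ω => W.norm_pow_mulVec_apply_le k _ i
    _ = ‖W‖ ^ k * ∑ p, ∫ ω, ‖ε t ω p‖ ∂μ := by
        rw [integral_const_mul, integral_finsetSum _ fun p _ => hint p]
    _ ≤ ‖W‖ ^ k * Fintype.card ι := by
        gcongr
        exact (Finset.sum_le_sum fun p _ => hε.integral_norm_le_one t p).trans (by simp)

lemma integral_norm_pow_mulVec_mul_le (k l : ℕ) (s t : T) (i j : ι) :
    ∫ ω, ‖(W ^ k *ᵥ ε s ω) i * (W ^ l *ᵥ ε t ω) j‖ ∂μ ≤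
      ‖W‖ ^ k * ‖W‖ ^ l * Fintype.card ι ^ 2 := by
  have hint : ∀ m p, Integrable (fun ω => ‖ε s ω m * ε t ω p‖) μ := fun m p =>
    ((hε.memLp s m).integrable_mul (hε.memLp t p)).norm
  have hbound : ∀ ω, ‖(W ^ k *ᵥ ε s ω) i * (W ^ l *ᵥ ε t ω) j‖ ≤
      ‖W‖ ^ k * ‖W‖ ^ l * ∑ m, ∑ p, ‖ε s ω m * ε t ω p‖ := fun ω => by
    calc ‖(W ^ k *ᵥ ε s ω) i * (W ^ l *ᵥ ε t ω) j‖
        ≤ (‖W‖ ^ k * ∑ m, ‖ε s ω m‖) * (‖W‖ ^ l * ∑ p, ‖ε t ω p‖) := by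
          rw [norm_mul]
          exact mul_le_mul (W.norm_pow_mulVec_apply_le k _ i) (W.norm_pow_mulVec_apply_le l _ j)
            (norm_nonneg _) (by positivity)
      _ = ‖W‖ ^ k * ‖W‖ ^ l * ∑ m, ∑ p, ‖ε s ω m * ε t ω p‖ := by
          simp only [norm_mul]
          rw [mul_mul_mul_comm, Finset.sum_mul_sum]
  calc ∫ ω, ‖(W ^ k *ᵥ ε s ω) i * (W ^ l *ᵥ ε t ω) j‖ ∂μ
      ≤ ∫ ω, ‖W‖ ^ k * ‖W‖ ^ l * ∑ m, ∑ p, ‖ε s ω m * ε t ω p‖ ∂μ :=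
        integral_mono
          ((hε.memLp_mulVec_apply _ s i).integrable_mul (hε.memLp_mulVec_apply _ t j)).norm
          ((integrable_finsetSum _ fun m _ =>
            integrable_finsetSum _ fun p _ => hint m p).const_mul _) hbound
    _ = ‖W‖ ^ k * ‖W‖ ^ l * ∑ m, ∑ p, ∫ ω, ‖ε s ω m * ε t ω p‖ ∂μ := by
        rw [integral_const_mul,
          integral_finsetSum _ fun m _ => integrable_finsetSum _ fun p _ => hint m p]
        simp_rw [integral_finsetSum _ fun p _ => hint _ p]
    _ ≤ ‖W‖ ^ k * ‖W‖ ^ l * ∑ _m : ι, ∑ _p : ι, 1 := by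
        gcongr with m _ p _
        exact hε.integral_norm_mul_le_one s t m p
    _ = ‖W‖ ^ k * ‖W‖ ^ l * Fintype.card ι ^ 2 := by simp [sq]

end

variable [Fintype ι] {ε : ℤ → Ω → ι → ℝ} (hε : IsOrthonormalNoise ε μ) [IsProbabilityMeasure μ]
  (W : Matrix ι ι ℝ)
include hε

lemma ae_summable_norm_pow_mulVec (hW : ‖W‖ < 1) (t : ℤ) :
    ∀ᵐ ω ∂μ, ∀ i, Summable fun k : ℕ => ‖(W ^ k *ᵥ ε (t - k) ω) i‖ := by
  refine ae_all_iff.mpr fun i => ae_summable_norm_of_summable_integral_norm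
    (fun k => (hε.memLp_mulVec_apply _ _ i).integrable one_le_two) ?_
  exact Summable.of_nonneg_of_le (fun k => integral_nonneg fun _ => norm_nonneg _)
    (fun k => hε.integral_norm_pow_mulVec_le W k _ i)
    ((summable_geometric_of_lt_one (norm_nonneg W) hW).mul_right _)

lemma integral_tsum_pow_mulVec_mul_tsum (hW : ‖W‖ < 1) (a b : ℤ) (i j : ι) :
    ∫ ω, (∑' k : ℕ, W ^ k *ᵥ ε (a - k) ω) i * (∑' l : ℕ, W ^ l *ᵥ ε (b - l) ω) j ∂μ =
      ∑' kl : ℕ × ℕ, if (kl.2 : ℤ) - kl.1 = b - a then (W ^ kl.1 * (W ^ kl.2)ᵀ) i j else 0 := by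
  have hsum := hε.ae_summable_norm_pow_mulVec W hW
  have happly : ∀ t, ∀ᵐ ω ∂μ, ∀ m, (∑' k : ℕ, W ^ k *ᵥ ε (t - k) ω) m =
      ∑' k : ℕ, (W ^ k *ᵥ ε (t - k) ω) m := fun t => by
    filter_upwards [hsum t] with ω hω m
    exact tsum_apply (Pi.summable.mpr fun p => (hω p).of_norm)
  have hgeom := summable_geometric_of_lt_one (norm_nonneg W) hW
  rw [integral_congr_ae (by filter_upwards [happly a, happly b] with ω ha hb; rw [ha, hb]),
    integral_tsum_mul_tsum ((hsum a).mono fun ω h => h i) ((hsum b).mono fun ω h => h j)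
      (fun kl => (hε.memLp_mulVec_apply _ _ i).integrable_mul (hε.memLp_mulVec_apply _ _ j))
      (Summable.of_nonneg_of_le (fun _ => integral_nonneg fun _ => norm_nonneg _)
        (fun kl => hε.integral_norm_pow_mulVec_mul_le W kl.1 kl.2 _ _ i j)
        ((hgeom.mul_of_nonneg hgeom (fun _ => by positivity) fun _ => by positivity).mul_right _))]
  refine tsum_congr fun kl => ?_
  rw [hε.integral_mulVec_mul_mulVec]
  exact if_congr (by omega) rfl rfl

end IsOrthonormalNoise

end

/-- Let `W ∈ ℝ^{n×n}` have L2 operator norm `‖W‖ < 1`, and let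
`(ε_t)_{t∈ℤ}` be random vectors in `ℝⁿ` whose coordinates, over all `t` and
positions, form an independent family of standard Gaussians `N(0,1)`.
For `t ∈ ℤ` let `z_t = Σ_{k≥0} Wᵏ ε_{t−k}` (via `tsum`, which agrees with the
almost-sure limit of the partial sums).  Then for all `a, b ∈ ℤ` the
cross-covariance matrix satisfies, entrywise,
`E[z_a z_bᵀ] = S_{b−a}`, where `S_q = Σ_{k≥0} W^{k+(−q)⁺} (W^{k+q⁺})ᵀ` and
`x⁺ = max(x,0)` (realized via `Int.toNat`). -/
theorem esn_noise_cross_covariance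
    (n : ℕ) (W : Matrix (Fin n) (Fin n) ℝ) (hW : ‖W‖ < 1)
    {Ω : Type*} [MeasurableSpace Ω] (μ : Measure Ω) [IsProbabilityMeasure μ]
    (ε : ℤ → Ω → (Fin n → ℝ))
    (hmeas : ∀ t, Measurable (ε t))
    (hindep : iIndepFun
      (fun p : ℤ × Fin n => fun ω => ε p.1 ω p.2) μ)
    (hgauss : ∀ t i, μ.map (fun ω => ε t ω i) = gaussianReal 0 1)
    (z : ℤ → Ω → (Fin n → ℝ))
    (hz : ∀ t ω, z t ω = ∑' k : ℕ, W ^ k *ᵥ ε (t - k) ω) :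
    ∀ a b : ℤ, ∀ i j : Fin n,
      ∫ ω, z a ω i * z b ω j ∂μ =
        (∑' k : ℕ, W ^ (k + (-(b - a)).toNat) * (W ^ (k + (b - a).toNat))ᵀ) i j := by
  intro a b i j
  have hε : IsOrthonormalNoise ε μ := isOrthonormalNoise_of_iIndepFun_gaussianReal
    (fun t i => ⟨((measurable_pi_apply i).comp (hmeas t)).aemeasurable, hgauss t i⟩) hindep
  have hS := W.summable_pow_add_mul_transpose_pow_add hW (-(b - a)).toNat (b - a).toNat
  simp only [hz]
  rw [hε.integral_tsum_pow_mulVec_mul_tsum W hW,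
    tsum_prod_ite_sub_eq (fun k l => (W ^ k * (W ^ l)ᵀ) i j)]
  exact ((congrFun (tsum_apply hS) j).trans (tsum_apply (Pi.summable.mp hS i))).symm
end

section
/- Let D ∈ ℝ^{T×T} be symmetric positive definite, U ∈ ℝ^{T×T} arbitrary, b ∈ ℝ^T, and η > 0. Then bᵀ U ( I_T + η⁻² Uᵀ D U )⁻¹ Uᵀ b ≤ η² · bᵀ D⁻¹ b. Consequently, for a task r = √T Uᵀ b the asymptotic training MSE (1−c)·bᵀU(I_T + η⁻²UᵀDU)⁻¹Uᵀb is at most (1−c)η² bᵀD⁻¹b and vanishes as η → 0. -/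
/-!
With `X := η⁻² D`, the Woodbury identity gives
`X⁻¹ - U (1 + Uᵀ X U)⁻¹ Uᵀ = (X + X U Uᵀ X)⁻¹`, the inverse of a positive definite matrix.
Hence `U (1 + Uᵀ X U)⁻¹ Uᵀ ≤ X⁻¹ = η² D⁻¹` in the Loewner order, and the bound is the
quadratic form of this inequality at `b`.
-/

open Matrix

namespace Matrix

variable {n m : Type*} [Fintype n] [DecidableEq n] [Fintype m] [DecidableEq m]

theorem add_mul_mul_mul_inv_eq_sub {R : Type*} [CommRing R] {X : Matrix n n R}
    (hX : IsUnit X.det) (U : Matrix n m R) (V : Matrix m n R) (hN : IsUnit (1 + V * X * U)) :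
    (X + X * U * V * X)⁻¹ = X⁻¹ - U * (1 + V * X * U)⁻¹ * V := by
  have h := add_mul_mul_inv_eq_sub X (X * U) 1 (V * X) ((isUnit_iff_isUnit_det X).mpr hX)
    isUnit_one (by simpa [Matrix.mul_assoc, hX] using hN)
  simpa [Matrix.mul_assoc, hX] using h

open scoped ComplexOrder in
theorem PosDef.inv_sub_mul_inv_one_add_conjTranspose_mul_mul {𝕜 : Type*} [RCLike 𝕜]
    {X : Matrix n n 𝕜} (hX : X.PosDef) (U : Matrix n m 𝕜) :
    (X⁻¹ - U * (1 + Uᴴ * X * U)⁻¹ * Uᴴ).PosDef := by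
  have hN : (1 + Uᴴ * X * U).PosDef :=
    PosDef.one.add_posSemidef (hX.posSemidef.conjTranspose_mul_mul_same U)
  have hS : (X + X * U * Uᴴ * X).PosDef := by
    refine hX.add_posSemidef ?_
    simpa [Matrix.mul_assoc, hX.isHermitian.eq] using
      PosSemidef.one.mul_mul_conjTranspose_same (X * U)
  rw [← add_mul_mul_mul_inv_eq_sub ((isUnit_iff_isUnit_det X).mp hX.isUnit) U Uᴴ hN.isUnit]
  exact hS.inv

end Matrix

/-- Let `D ∈ ℝ^{T×T}` be symmetric positive definite, `U ∈ ℝ^{T×T}` arbitrary,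
`b ∈ ℝ^T` and `η > 0`.  Then
`bᵀ U (I_T + η⁻² Uᵀ D U)⁻¹ Uᵀ b ≤ η² · bᵀ D⁻¹ b`.
Consequently, for a task `r = √T Uᵀ b` the asymptotic training MSE
`(1−c) · bᵀ U (I_T + η⁻² Uᵀ D U)⁻¹ Uᵀ b` is at most `(1−c) η² bᵀ D⁻¹ b` and
vanishes as `η → 0`. -/
theorem training_mse_bound_delay_task
    (T : ℕ)
    (D : Matrix (Fin T) (Fin T) ℝ) (hD : D.PosDef)
    (U : Matrix (Fin T) (Fin T) ℝ) (b : Fin T → ℝ)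
    (η : ℝ) (hη : 0 < η) :
    b ⬝ᵥ ((U * ((1 : Matrix (Fin T) (Fin T) ℝ) + (η ^ 2)⁻¹ • (Uᵀ * D * U))⁻¹ * Uᵀ) *ᵥ b) ≤
      η ^ 2 * (b ⬝ᵥ (D⁻¹ *ᵥ b)) := by
  have hX : ((η ^ 2)⁻¹ • D).PosDef := hD.smul (by positivity)
  have hXinv : ((η ^ 2)⁻¹ • D)⁻¹ = η ^ 2 • D⁻¹ :=
    inv_eq_left_inv <| by
      rw [smul_mul_smul_comm, nonsing_inv_mul D ((isUnit_iff_isUnit_det D).mp hD.isUnit),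
        mul_inv_cancel₀ (by positivity), one_smul]
  have hUXU : Uᴴ * ((η ^ 2)⁻¹ • D) * U = (η ^ 2)⁻¹ • (Uᵀ * D * U) := by
    rw [conjTranspose_eq_transpose_of_trivial, Matrix.mul_smul, Matrix.smul_mul]
  have hquad :=
    (hX.inv_sub_mul_inv_one_add_conjTranspose_mul_mul U).posSemidef.dotProduct_mulVec_nonneg b
  rw [hXinv, hUXU, conjTranspose_eq_transpose_of_trivial, star_trivial, sub_mulVec, dotProduct_sub,
    smul_mulVec, dotProduct_smul, smul_eq_mul, sub_nonneg] at hquad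
  exact hquad
end

section
/- Let Z be a real n×n orthogonal matrix (ZᵀZ = I_n), σ ∈ [0,1), W = σZ, and S₀ = Σ_{k≥0} Wᵏ(Wᵏ)ᵀ. Then S₀ = (1 − σ²)⁻¹ I_n, and for every m ∈ ℝⁿ and every τ ∈ ℕ, the generalized Fisher-memory coefficient satisfies mᵀ (Wᵗᵃᵘ)ᵀ S₀⁻¹ Wᵗᵃᵘ m = (1 − σ²) σ^{2τ} ‖m‖²; in particular for ‖m‖ = 1 it equals (1 − σ²)σ^{2τ}. -/
/-! Powers of an orthogonal matrix are orthogonal, so `Wᵏ (Wᵏ)ᵀ = σ^{2k} I` and `S₀` is a geometric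
series summing to `(1 - σ²)⁻¹ I`. Its inverse is `(1 - σ²) I`, and `(Wᵗ)ᵀ Wᵗ = σ^{2τ} I` as well. -/

open Matrix

namespace Matrix

variable {ι R : Type*} [Fintype ι] [DecidableEq ι] [CommRing R]

theorem pow_mul_transpose_pow_of_transpose_mul_self {Z : Matrix ι ι R} (hZ : Zᵀ * Z = 1)
    (k : ℕ) : Z ^ k * (Z ^ k)ᵀ = 1 ∧ (Z ^ k)ᵀ * Z ^ k = 1 := by
  have hk : Z ^ k ∈ orthogonalGroup ι R := pow_mem (mem_orthogonalGroup_iff' ι R |>.mpr hZ) k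
  exact ⟨(mem_orthogonalGroup_iff ι R).mp hk, (mem_orthogonalGroup_iff' ι R).mp hk⟩

theorem smul_pow_mul_transpose_smul_pow {Z : Matrix ι ι R} (hZ : Zᵀ * Z = 1) (σ : R) (k : ℕ) :
    (σ • Z) ^ k * ((σ • Z) ^ k)ᵀ = (σ ^ 2) ^ k • (1 : Matrix ι ι R) ∧
      ((σ • Z) ^ k)ᵀ * (σ • Z) ^ k = (σ ^ 2) ^ k • (1 : Matrix ι ι R) := by
  obtain ⟨h₁, h₂⟩ := pow_mul_transpose_pow_of_transpose_mul_self hZ k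
  rw [smul_pow, transpose_smul, smul_mul_smul_comm, smul_mul_smul_comm, h₁, h₂, ← mul_pow, sq]
  exact ⟨rfl, rfl⟩

theorem tsum_smul_pow_mul_transpose_smul_pow {Z : Matrix ι ι ℝ} (hZ : Zᵀ * Z = 1) {σ : ℝ}
    (hσ : |σ| < 1) :
    ∑' k : ℕ, (σ • Z) ^ k * ((σ • Z) ^ k)ᵀ = (1 - σ ^ 2)⁻¹ • (1 : Matrix ι ι ℝ) := by
  have hσ2 : σ ^ 2 < 1 := by simpa using (sq_lt_one_iff_abs_lt_one σ).mpr hσ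
  simp_rw [(smul_pow_mul_transpose_smul_pow hZ σ _).1]
  rw [(summable_geometric_of_lt_one (sq_nonneg σ) hσ2).tsum_smul_const,
    tsum_geometric_of_lt_one (sq_nonneg σ) hσ2]

theorem inv_smul_one {K : Type*} [Field K] {c : K} (hc : c ≠ 0) :
    (c • (1 : Matrix ι ι K))⁻¹ = c⁻¹ • 1 :=
  inv_eq_right_inv <| by rw [smul_mul_smul_comm, one_mul, mul_inv_cancel₀ hc, one_smul]

theorem dotProduct_smul_one_mulVec (c : R) (m : ι → R) :
    m ⬝ᵥ ((c • (1 : Matrix ι ι R)) *ᵥ m) = c * (m ⬝ᵥ m) := by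
  rw [smul_mulVec, one_mulVec, dotProduct_smul, smul_eq_mul]

end Matrix

/-- Let `Z ∈ ℝ^{n×n}` be orthogonal (`Zᵀ Z = I_n`), `σ ∈ [0,1)`, `W = σ Z`,
and `S₀ = Σ_{k≥0} Wᵏ(Wᵏ)ᵀ`.  Then `S₀ = (1 − σ²)⁻¹ I_n`, and for every
`m ∈ ℝⁿ` and every `τ ∈ ℕ` the generalized Fisher-memory coefficient
satisfies `mᵀ (Wᵗ)ᵀ S₀⁻¹ Wᵗ m = (1 − σ²) σ^{2τ} ‖m‖²` (with `t = τ`); in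
particular for `‖m‖ = 1` it equals `(1 − σ²) σ^{2τ}`.  Here `‖m‖² = m ⬝ᵥ m`
is the squared Euclidean norm. -/
theorem haar_fisher_memory_coefficient
    (n : ℕ) (Z : Matrix (Fin n) (Fin n) ℝ) (hZ : Zᵀ * Z = 1)
    (σ : ℝ) (hσ0 : 0 ≤ σ) (hσ1 : σ < 1)
    (W : Matrix (Fin n) (Fin n) ℝ) (hW : W = σ • Z) :
    (∑' k : ℕ, W ^ k * (W ^ k)ᵀ) = (1 - σ ^ 2)⁻¹ • (1 : Matrix (Fin n) (Fin n) ℝ) ∧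
      ∀ (m : Fin n → ℝ) (τ : ℕ),
        m ⬝ᵥ (((W ^ τ)ᵀ * (∑' k : ℕ, W ^ k * (W ^ k)ᵀ)⁻¹ * W ^ τ) *ᵥ m) =
          (1 - σ ^ 2) * σ ^ (2 * τ) * (m ⬝ᵥ m) := by
  subst hW
  have hσ : |σ| < 1 := abs_lt.mpr ⟨by linarith, hσ1⟩
  have hgap : 1 - σ ^ 2 ≠ 0 := by nlinarith
  have hS := tsum_smul_pow_mul_transpose_smul_pow hZ hσ
  refine ⟨hS, fun m τ => ?_⟩
  have hform : ((σ • Z) ^ τ)ᵀ * ((1 - σ ^ 2)⁻¹ • 1)⁻¹ * (σ • Z) ^ τ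
      = ((1 - σ ^ 2) * σ ^ (2 * τ)) • (1 : Matrix (Fin n) (Fin n) ℝ) := by
    rw [inv_smul_one (inv_ne_zero hgap), inv_inv, mul_smul_one, smul_mul,
      (smul_pow_mul_transpose_smul_pow hZ σ τ).2, smul_smul, pow_mul]
  rw [hS, hform, dotProduct_smul_one_mulVec]
end
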